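/- arXiv:2006.08110 — 7 statements merged into one kernel-verified Lean document; each statement's English description precedes it below -/
import Mathlib

section
/- Let ρ: ℝ≥0 → [0,1] be non-decreasing and continuous, and let h: (ℝ≥0)^M → [0,1]^M be continuous and non-decreasing in each coordinate. Given vectors x_1,…,x_n ∈ (ℝ≥0)^M, ℓ_1,…,ℓ_n ∈ ℝ≥0, c_1,…,c_n ∈ ℝ>0, define the sequence σ_(1) = 0 and σ_(k) = ∑_{i=1}^n x_i · ρ((ℓ_i + x_i · h(σ_(k-1)/n))/c_i) for k ≥ 2 (where x_i · h denotes the componentwise scaling of the vector x_i by the scalar, and the inner product x_i · h(·) is the standard dot product). Then the limit χ_n := n^(-1) lim_{k→∞} σ_(k) exists and is the componentwise smallest solution χ ∈ (ℝ≥0)^M of the equation ∑_{i=1}^n x_i ρ((ℓ_i + x_i · h(χ))/c_i) = nχ. -/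
open Filter Finset

/-- Proposition 3.1: the auxiliary fire sales process converges and its limit
is the componentwise smallest solution of the fixed-point equation. -/
theorem stmt0 (M n : ℕ) (hn : 0 < n)
    (x : Fin n → Fin M → ℝ) (hx : ∀ i m, 0 ≤ x i m)
    (ℓ : Fin n → ℝ) (hℓ : ∀ i, 0 ≤ ℓ i)
    (c : Fin n → ℝ) (hc : ∀ i, 0 < c i)
    (ρ : ℝ → ℝ) (hρ0 : ρ 0 = 0) (hρmono : Monotone ρ) (hρcont : Continuous ρ)
    (hρrange : ∀ u, 0 ≤ ρ u ∧ ρ u ≤ 1)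
    (h : (Fin M → ℝ) → Fin M → ℝ) (hhcont : Continuous h)
    (hhrange : ∀ χ m, 0 ≤ h χ m ∧ h χ m ≤ 1)
    (hhmono : ∀ χ χ' : Fin M → ℝ, (∀ m, χ m ≤ χ' m) → ∀ m, h χ m ≤ h χ' m)
    (σ : ℕ → Fin M → ℝ) (hσ0 : σ 0 = 0)
    (hσrec : ∀ k m, σ (k + 1) m =
      ∑ i, x i m * ρ ((ℓ i + ∑ m', x i m' * h (fun m'' => σ k m'' / n) m') / c i)) :
    ∃ χ : Fin M → ℝ,
      (∀ m, Tendsto (fun k => σ k m / n) atTop (nhds (χ m))) ∧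
      (∀ m, ∑ i, x i m * ρ ((ℓ i + ∑ m', x i m' * h χ m') / c i) = n * χ m) ∧
      (∀ χ' : Fin M → ℝ, (∀ m, 0 ≤ χ' m) →
        (∀ m, ∑ i, x i m * ρ ((ℓ i + ∑ m', x i m' * h χ' m') / c i) = n * χ' m) →
        ∀ m, χ m ≤ χ' m) := by
  have hn' : (0:ℝ) < n := by exact_mod_cast hn
  set F : (Fin M → ℝ) → Fin M → ℝ :=
    fun χ m => ∑ i, x i m * ρ ((ℓ i + ∑ m', x i m' * h χ m') / c i) with hF
  -- monotonicity of F
  have hFmono : ∀ a b : Fin M → ℝ, (∀ m, a m ≤ b m) → ∀ m, F a m ≤ F b m := by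
    intro a b hab m
    apply Finset.sum_le_sum
    intro i _
    apply mul_le_mul_of_nonneg_left _ (hx i m)
    apply hρmono
    gcongr
    · exact (hc i).le
    · exact hx _ _
    · exact hhmono a b hab _
  have hFnonneg : ∀ a m, 0 ≤ F a m := by
    intro a m
    apply Finset.sum_nonneg
    intro i _
    exact mul_nonneg (hx i m) (hρrange _).1
  have hFbound : ∀ a m, F a m ≤ ∑ i, x i m := by
    intro a m
    apply Finset.sum_le_sum
    intro i _
    calc x i m * ρ _ ≤ x i m * 1 := mul_le_mul_of_nonneg_left (hρrange _).2 (hx i m)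
    _ = x i m := mul_one _
  have hσrec' : ∀ k, σ (k + 1) = F (fun m => σ k m / n) := by
    intro k; funext m; exact hσrec k m
  -- σ monotone in k
  have hmono : ∀ m, Monotone (fun k => σ k m) := by
    intro m
    apply monotone_nat_of_le_succ
    have key : ∀ k, ∀ m, σ k m ≤ σ (k + 1) m := by
      intro k
      induction k with
      | zero => intro m; rw [hσ0, hσrec' 0]; exact hFnonneg _ m
      | succ k ih =>
        intro m
        rw [hσrec' k, hσrec' (k+1)]
        apply hFmono
        intro m'
        exact div_le_div_of_nonneg_right (ih m') hn'.le
    intro k; exact key k _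
  have hbdd : ∀ k m, σ k m ≤ ∑ i, x i m := by
    intro k
    induction k with
    | zero => intro m; rw [hσ0]; exact Finset.sum_nonneg fun i _ => hx i m
    | succ k ih => intro m; rw [hσrec' k]; exact hFbound _ m
  -- limit
  set L : Fin M → ℝ := fun m => ⨆ k, σ k m with hL
  have hbddAbove : ∀ m, BddAbove (Set.range fun k => σ k m) :=
    fun m => ⟨∑ i, x i m, by rintro _ ⟨k, rfl⟩; exact hbdd k m⟩
  have hLtend : ∀ m, Tendsto (fun k => σ k m) atTop (nhds (L m)) :=
    fun m => tendsto_atTop_ciSup (hmono m) (hbddAbove m)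
  refine ⟨fun m => L m / n, ?_, ?_, ?_⟩
  · intro m
    exact (hLtend m).div_const n
  · intro m
    have hχtend : Tendsto (fun k => (fun m'' => σ k m'' / n)) atTop
        (nhds (fun m => L m / n)) := by
      rw [tendsto_pi_nhds]
      intro m'
      exact (hLtend m').div_const n
    have hGcont : Continuous (fun χ : Fin M → ℝ =>
        ∑ i, x i m * ρ ((ℓ i + ∑ m', x i m' * h χ m') / c i)) := by
      apply continuous_finset_sum
      intro i _
      apply Continuous.mul continuous_const
      apply hρcont.comp
      apply Continuous.div_const
      apply Continuous.add continuous_const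
      apply continuous_finset_sum
      intro m' _
      exact (continuous_const.mul ((continuous_apply m').comp hhcont))
    have h1 : Tendsto (fun k => σ (k + 1) m) atTop (nhds (L m)) :=
      (hLtend m).comp (tendsto_add_atTop_nat 1)
    have h2 : Tendsto (fun k => σ (k + 1) m) atTop
        (nhds (∑ i, x i m * ρ ((ℓ i + ∑ m', x i m' * h (fun m => L m / n) m') / c i))) := by
      simp only [hσrec]
      exact (hGcont.tendsto _).comp hχtend
    have := tendsto_nhds_unique h1 h2
    rw [← this]
    field_simp
  · intro χ' hχ'0 hχ'fix m
    have key : ∀ k m, σ k m ≤ n * χ' m := by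
      intro k
      induction k with
      | zero => intro m; rw [hσ0]; exact mul_nonneg hn'.le (hχ'0 m)
      | succ k ih =>
        intro m
        rw [hσrec' k, ← hχ'fix m]
        apply hFmono
        intro m'
        rw [div_le_iff₀ hn']
        calc σ k m' ≤ n * χ' m' := ih m'
        _ = χ' m' * n := mul_comm _ _
    rw [div_le_iff₀ hn']
    apply le_of_tendsto (hLtend m)
    filter_upwards with k
    calc σ k m ≤ n * χ' m := key k m
    _ = χ' m * n := mul_comm _ _
end

section
/- In the setting of the fire sales process and the auxiliary process on the same finite system (same x_i, c_i, ℓ_i, ρ, h), for every round k the cumulative sales of the fire sales process are dominated by those of the auxiliary process: τ_(k) ≤ σ_(k) componentwise, for all k ≥ 1. Consequently the final sales satisfy ψ_n = lim_k τ_(k)/n ≤ lim_k σ_(k)/n = χ_n componentwise. -/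
/-!
Both processes are driven by the same monotone map from losses to sales, so it suffices to
bound the fire-sale losses by the losses of the auxiliary process. Sales only grow from round to
round, hence so does the price impact; booking every unit already sold at the current impact
instead of the impact of its round can only increase the loss, and that upper bound
`ℓ_i + x_i · h(τ_(k)/n)` is the auxiliary loss evaluated at `τ_(k)`. An induction on `k` then
gives `τ_(k) ≤ σ_(k)`, and the limits inherit the inequality.
-/

open Filter Finset

namespace FireSale

variable {ι κ : Type*}

/-- Holdings `a j` in round `j` under price impact `g j`: units sold between rounds `j` and
`j + 1` are booked at the impact of round `j`, units still held at the current impact. -/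
def cumulativeLoss [Fintype κ] (a g : ℕ → κ → ℝ) (k : ℕ) : ℝ :=
  ∑ m, a k m * g k m + ∑ j ∈ range k, ∑ m, (a j m - a (j + 1) m) * g j m

noncomputable def totalSales [Fintype ι] (x : ι → κ → ℝ) (c : ι → ℝ) (ρ : ℝ → ℝ) (L : ι → ℝ) :
    κ → ℝ :=
  fun m => ∑ i, x i m * ρ (L i / c i)

section CumulativeLoss

variable [Fintype κ] {a g : ℕ → κ → ℝ}

theorem cumulativeLoss_succ (a g : ℕ → κ → ℝ) (k : ℕ) :
    cumulativeLoss a g (k + 1) =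
      cumulativeLoss a g k + ∑ m, a (k + 1) m * (g (k + 1) m - g k m) := by
  simp only [cumulativeLoss, sum_range_succ]
  have hstep : ∑ m, a (k + 1) m * g (k + 1) m + ∑ m, (a k m - a (k + 1) m) * g k m =
      ∑ m, a k m * g k m + ∑ m, a (k + 1) m * (g (k + 1) m - g k m) := by
    rw [← sum_add_distrib, ← sum_add_distrib]
    exact sum_congr rfl fun m _ => by ring
  linarith

theorem cumulativeLoss_le_succ {k : ℕ} (ha : 0 ≤ a (k + 1)) (hg : g k ≤ g (k + 1)) :
    cumulativeLoss a g k ≤ cumulativeLoss a g (k + 1) := by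
  rw [cumulativeLoss_succ]
  exact le_add_of_nonneg_right <|
    sum_nonneg fun m _ => mul_nonneg (ha m) (sub_nonneg.2 (hg m))

theorem cumulativeLoss_le (ha : ∀ k, a k ≤ a 0) (hg : Monotone g) (k : ℕ) :
    cumulativeLoss a g k ≤ ∑ m, a 0 m * g k m := by
  induction k with
  | zero => simp [cumulativeLoss]
  | succ k ih =>
    rw [cumulativeLoss_succ]
    calc cumulativeLoss a g k + ∑ m, a (k + 1) m * (g (k + 1) m - g k m)
        ≤ ∑ m, (a 0 m * g k m + a (k + 1) m * (g (k + 1) m - g k m)) := by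
          rw [sum_add_distrib]
          exact add_le_add_left ih _
      _ ≤ ∑ m, a 0 m * g (k + 1) m := sum_le_sum fun m _ => by
          nlinarith [mul_nonneg (sub_nonneg.2 (ha (k + 1) m))
            (sub_nonneg.2 (hg (Nat.le_succ k) m))]

end CumulativeLoss

section Sales

variable [Fintype ι] {x : ι → κ → ℝ} {c : ι → ℝ} {ρ : ℝ → ℝ}

theorem totalSales_mono (hx : ∀ i m, 0 ≤ x i m) (hc : ∀ i, 0 ≤ c i) (hρ : Monotone ρ) :
    Monotone (totalSales x c ρ) := fun _ _ hL m =>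
  sum_le_sum fun i _ =>
    mul_le_mul_of_nonneg_left (hρ (div_le_div_of_nonneg_right (hL i) (hc i))) (hx i m)

theorem totalSales_nonneg (hx : ∀ i m, 0 ≤ x i m) (hρ : ∀ u, 0 ≤ ρ u) (L : ι → ℝ) :
    0 ≤ totalSales x c ρ L := fun m =>
  sum_nonneg fun i _ => mul_nonneg (hx i m) (hρ _)

end Sales

variable [Fintype κ] {x : ι → κ → ℝ} {ℓ c : ι → ℝ} {ρ : ℝ → ℝ} {H : (κ → ℝ) → κ → ℝ}
  {xk : ι → ℕ → κ → ℝ} {τ : ℕ → κ → ℝ} {ℓk : ι → ℕ → ℝ}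

theorem loss_le_of_sales_monotone (hxk0 : ∀ i, xk i 0 = x i) (hxk : ∀ i k, xk i k ≤ x i)
    (hH : Monotone H) (hτ : Monotone τ)
    (hℓk : ∀ i k, ℓk i k = ℓ i + cumulativeLoss (xk i) (fun j => H (τ j)) k) (i : ι) (k : ℕ) :
    ℓk i k ≤ ℓ i + ∑ m, x i m * H (τ k) m := by
  rw [hℓk, ← hxk0]
  exact add_le_add_right (cumulativeLoss_le (fun k => hxk0 i ▸ hxk i k) (hH.comp hτ) k) _

variable [Fintype ι]

theorem sales_monotone (hx : ∀ i m, 0 ≤ x i m) (hc : ∀ i, 0 ≤ c i) (hρ : Monotone ρ)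
    (hρ_nonneg : ∀ u, 0 ≤ ρ u) (hH : Monotone H) (hxk : ∀ i k, 0 ≤ xk i k)
    (hτ0 : τ 0 = 0) (hτ : ∀ k, τ (k + 1) = totalSales x c ρ (fun i => ℓk i k))
    (hℓk : ∀ i k, ℓk i k = ℓ i + cumulativeLoss (xk i) (fun j => H (τ j)) k) :
    Monotone τ := by
  refine monotone_nat_of_le_succ fun k => ?_
  induction k with
  | zero => rw [hτ0, hτ]; exact totalSales_nonneg hx hρ_nonneg _
  | succ k ih =>
    rw [hτ, hτ]
    refine totalSales_mono hx hc hρ fun i => ?_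
    rw [hℓk, hℓk]
    exact add_le_add_right (cumulativeLoss_le_succ (hxk i (k + 1)) (hH ih)) _

end FireSale

open FireSale

-- Indices are shifted so that round `k+1` of the paper is index `k`.
theorem stmt2_general (M n : ℕ)
    (x : Fin n → Fin M → ℝ) (hx : ∀ i m, 0 ≤ x i m)
    (ℓ : Fin n → ℝ)
    (c : Fin n → ℝ) (hc : ∀ i, 0 < c i)
    (ρ : ℝ → ℝ) (hρmono : Monotone ρ)
    (hρrange : ∀ u, 0 ≤ ρ u ∧ ρ u ≤ 1)
    (h : (Fin M → ℝ) → Fin M → ℝ)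
    (hhmono : ∀ χ χ' : Fin M → ℝ, (∀ m, χ m ≤ χ' m) → ∀ m, h χ m ≤ h χ' m)
    -- fire sales process
    (xk : Fin n → ℕ → Fin M → ℝ) (τ : ℕ → Fin M → ℝ) (ℓk : Fin n → ℕ → ℝ)
    (hxk0 : ∀ i, xk i 0 = x i)
    (hxkrec : ∀ i k m, xk i (k + 1) m = x i m * (1 - ρ (ℓk i k / c i)))
    (hτ0 : τ 0 = 0)
    (hτrec : ∀ k m, τ (k + 1) m = ∑ i, x i m * ρ (ℓk i k / c i))
    (hℓk : ∀ i k, ℓk i k = ℓ i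
        + (∑ m, xk i k m * h (fun m' => τ k m' / n) m)
        + ∑ j ∈ Finset.range k, ∑ m, (xk i j m - xk i (j + 1) m) * h (fun m' => τ j m' / n) m)
    -- auxiliary process
    (σ : ℕ → Fin M → ℝ) (hσ0 : σ 0 = 0)
    (hσrec : ∀ k m, σ (k + 1) m =
        ∑ i, x i m * ρ ((ℓ i + ∑ m', x i m' * h (fun m'' => σ k m'' / n) m') / c i)) :
    (∀ k m, τ k m ≤ σ k m) ∧
    ∀ ψ χ : Fin M → ℝ,
      (∀ m, Tendsto (fun k => τ k m / n) atTop (nhds (ψ m))) →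
      (∀ m, Tendsto (fun k => σ k m / n) atTop (nhds (χ m))) →
      ∀ m, ψ m ≤ χ m := by
  set H : (Fin M → ℝ) → Fin M → ℝ := fun v => h fun m => v m / n
  have hH : Monotone H := fun v w hvw =>
    hhmono _ _ fun m => div_le_div_of_nonneg_right (hvw m) n.cast_nonneg
  have hc' i := (hc i).le
  have hloss i k : ℓk i k = ℓ i + cumulativeLoss (xk i) (fun j => H (τ j)) k := by
    rw [hℓk, add_assoc]; rfl
  have hxk i k : 0 ≤ xk i k ∧ xk i k ≤ x i := by
    cases k with
    | zero => rw [hxk0]; exact ⟨hx i, le_rfl⟩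
    | succ k =>
      have hρk := hρrange (ℓk i k / c i)
      refine ⟨fun m => ?_, fun m => ?_⟩
      · rw [Pi.zero_apply, hxkrec]; exact mul_nonneg (hx i m) (by linarith)
      · rw [hxkrec]; nlinarith [hx i m]
  have hτ_mono : Monotone τ := sales_monotone hx hc' hρmono (fun u => (hρrange u).1) hH
    (fun i k => (hxk i k).1) hτ0 (fun k => funext (hτrec k)) hloss
  have hτσ k : τ k ≤ σ k := by
    induction k with
    | zero => rw [hτ0, hσ0]
    | succ k ih =>
      rw [show τ (k + 1) = _ from funext (hτrec k), show σ (k + 1) = _ from funext (hσrec k)]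
      refine totalSales_mono hx hc' hρmono fun i => ?_
      calc ℓk i k ≤ ℓ i + ∑ m, x i m * H (τ k) m :=
            loss_le_of_sales_monotone hxk0 (fun i k => (hxk i k).2) hH hτ_mono hloss i k
        _ ≤ ℓ i + ∑ m, x i m * H (σ k) m := by
            gcongr with m
            exacts [hx i m, hH ih m]
  refine ⟨hτσ, fun ψ χ hψ hχ m => le_of_tendsto_of_tendsto' (hψ m) (hχ m) fun k => ?_⟩
  exact div_le_div_of_nonneg_right (hτσ k m) n.cast_nonneg

/-- The auxiliary process dominates the fire sales process round by round
(`τ_(k) ≤ σ_(k)`), hence also in the limit (`ψ_n ≤ χ_n`).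
Indices are shifted so that round `k+1` of the paper is index `k`. -/
theorem stmt2 (M n : ℕ) (hn : 0 < n)
    (x : Fin n → Fin M → ℝ) (hx : ∀ i m, 0 ≤ x i m)
    (ℓ : Fin n → ℝ) (hℓ : ∀ i, 0 ≤ ℓ i)
    (c : Fin n → ℝ) (hc : ∀ i, 0 < c i)
    (ρ : ℝ → ℝ) (hρ0 : ρ 0 = 0) (hρmono : Monotone ρ)
    (hρrange : ∀ u, 0 ≤ ρ u ∧ ρ u ≤ 1)
    (h : (Fin M → ℝ) → Fin M → ℝ)
    (hhrange : ∀ χ m, 0 ≤ h χ m ∧ h χ m ≤ 1)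
    (hhmono : ∀ χ χ' : Fin M → ℝ, (∀ m, χ m ≤ χ' m) → ∀ m, h χ m ≤ h χ' m)
    -- fire sales process
    (xk : Fin n → ℕ → Fin M → ℝ) (τ : ℕ → Fin M → ℝ) (ℓk : Fin n → ℕ → ℝ)
    (hxk0 : ∀ i, xk i 0 = x i)
    (hxkrec : ∀ i k m, xk i (k + 1) m = x i m * (1 - ρ (ℓk i k / c i)))
    (hτ0 : τ 0 = 0)
    (hτrec : ∀ k m, τ (k + 1) m = ∑ i, x i m * ρ (ℓk i k / c i))
    (hℓk : ∀ i k, ℓk i k = ℓ i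
        + (∑ m, xk i k m * h (fun m' => τ k m' / n) m)
        + ∑ j ∈ Finset.range k, ∑ m, (xk i j m - xk i (j + 1) m) * h (fun m' => τ j m' / n) m)
    -- auxiliary process
    (σ : ℕ → Fin M → ℝ) (hσ0 : σ 0 = 0)
    (hσrec : ∀ k m, σ (k + 1) m =
        ∑ i, x i m * ρ ((ℓ i + ∑ m', x i m' * h (fun m'' => σ k m'' / n) m') / c i)) :
    (∀ k m, τ k m ≤ σ k m) ∧
    ∀ ψ χ : Fin M → ℝ,
      (∀ m, Tendsto (fun k => τ k m / n) atTop (nhds (ψ m))) →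
      (∀ m, Tendsto (fun k => σ k m / n) atTop (nhds (χ m))) →
      ∀ m, ψ m ≤ χ m :=
  stmt2_general M n x hx ℓ c hc ρ hρmono hρrange h hhmono xk τ ℓk hxk0 hxkrec hτ0 hτrec hℓk σ hσ0
    hσrec
end

section
/- Let M ≥ 1 and let f^1, …, f^M: (ℝ≥0)^M → ℝ be of the form f^m(χ) = G^m(χ) − χ^m where each G^m: (ℝ≥0)^M → [0, b^m] is monotone (non-decreasing in each coordinate) and continuous, with G^m(0) ≥ 0. Then there exists a componentwise smallest joint root χ̂ ∈ (ℝ≥0)^M of all the f^m (i.e. f^m(χ̂) = 0 for all m and χ̂ ≤ z componentwise for any other joint root z), and moreover χ̂ lies in the connected component containing 0 of the set S = ∩_m {χ : f^m(χ) ≥ 0}. -/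
/-- Iterates of the map `χ ↦ (G m χ)_m` starting from `0`. -/
def stmt7Iter (M : ℕ) (G : Fin M → (Fin M → ℝ) → ℝ) : ℕ → (Fin M → ℝ)
  | 0 => fun _ => 0
  | n + 1 => fun m => G m (stmt7Iter M G n)

/-- Abstract Lemma 3.2/5.1: for `f^m(χ) = G^m(χ) − χ^m` with `G^m` monotone,
continuous and `[0, b^m]`-valued on the non-negative orthant, there is a
componentwise smallest joint root of the `f^m`, and it lies in the connected
component of `0` of the set `S = ∩_m {χ : f^m(χ) ≥ 0}`. -/
theorem stmt7 (M : ℕ) (G : Fin M → (Fin M → ℝ) → ℝ) (b : Fin M → ℝ)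
    (hmono : ∀ m, ∀ χ χ' : Fin M → ℝ,
      (∀ k, 0 ≤ χ k) → (∀ k, χ k ≤ χ' k) → G m χ ≤ G m χ')
    (hcont : ∀ m, ContinuousOn (G m) {χ : Fin M → ℝ | ∀ k, 0 ≤ χ k})
    (hrange : ∀ m, ∀ χ : Fin M → ℝ, (∀ k, 0 ≤ χ k) → 0 ≤ G m χ ∧ G m χ ≤ b m) :
    ∃ χhat : Fin M → ℝ, (∀ k, 0 ≤ χhat k) ∧ (∀ m, G m χhat = χhat m) ∧
      (∀ z : Fin M → ℝ, (∀ k, 0 ≤ z k) → (∀ m, G m z = z m) → ∀ k, χhat k ≤ z k) ∧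
      χhat ∈ connectedComponentIn
        {χ : Fin M → ℝ | (∀ k, 0 ≤ χ k) ∧ ∀ m, χ m ≤ G m χ} 0 := by
  classical
  set c : ℕ → (Fin M → ℝ) := stmt7Iter M G with hcdef
  -- nonnegativity of iterates
  have hnn : ∀ n k, 0 ≤ c n k := by
    intro n
    induction n with
    | zero => intro k; exact le_refl 0
    | succ n ih => intro k; exact (hrange k (c n) ih).1
  -- iterates increase
  have hstep : ∀ n k, c n k ≤ c (n + 1) k := by
    intro n
    induction n with
    | zero => intro k; exact (hrange k (c 0) (hnn 0)).1
    | succ n ih => intro k; exact hmono k (c n) (c (n + 1)) (hnn n) ih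
  have hmon : ∀ k, Monotone fun n => c n k :=
    fun k => monotone_nat_of_le_succ (fun n => hstep n k)
  have hbdd : ∀ k, BddAbove (Set.range fun n => c n k) := by
    intro k
    refine ⟨max (b k) 0, ?_⟩
    rintro x ⟨n, rfl⟩
    cases n with
    | zero => exact le_max_right _ _
    | succ n => exact le_max_of_le_left (hrange k (c n) (hnn n)).2
  set χhat : Fin M → ℝ := fun k => ⨆ n, c n k with hχdef
  have hle : ∀ n k, c n k ≤ χhat k := fun n k => le_ciSup (hbdd k) n
  have hχnn : ∀ k, 0 ≤ χhat k := fun k => hle 0 k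
  have htend : Filter.Tendsto c Filter.atTop (nhds χhat) := by
    rw [tendsto_pi_nhds]
    intro k
    exact tendsto_atTop_ciSup (hmon k) (hbdd k)
  -- fixed point
  have hfix : ∀ m, G m χhat = χhat m := by
    intro m
    have h1 : Filter.Tendsto (fun n => G m (c n)) Filter.atTop (nhds (G m χhat)) := by
      refine ((hcont m χhat hχnn).tendsto).comp ?_
      rw [tendsto_nhdsWithin_iff]
      exact ⟨htend, Filter.Eventually.of_forall (fun n => hnn n)⟩
    have h2 : Filter.Tendsto (fun n => c (n + 1) m) Filter.atTop (nhds (χhat m)) :=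
      (tendsto_pi_nhds.mp htend m).comp (Filter.tendsto_add_atTop_nat 1)
    exact tendsto_nhds_unique h1 h2
  -- least joint root
  have hleast : ∀ z : Fin M → ℝ, (∀ k, 0 ≤ z k) → (∀ m, G m z = z m) →
      ∀ k, χhat k ≤ z k := by
    intro z hz hfz k
    have hcz : ∀ n k, c n k ≤ z k := by
      intro n
      induction n with
      | zero => intro k; exact hz k
      | succ n ih =>
        intro k
        calc c (n + 1) k = G k (c n) := rfl
          _ ≤ G k z := hmono k (c n) z (hnn n) ih
          _ = z k := hfz k
    exact ciSup_le fun n => hcz n k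
  -- connectedness part
  refine ⟨χhat, hχnn, hfix, hleast, ?_⟩
  set S := {χ : Fin M → ℝ | (∀ k, 0 ≤ χ k) ∧ ∀ m, χ m ≤ G m χ} with hSdef
  set C := ⋃ n, segment ℝ (c n) (c (n + 1)) with hCdef
  have hsegIcc : ∀ n, segment ℝ (c n) (c (n + 1)) ⊆ Set.Icc (c n) (c (n + 1)) :=
    fun n => segment_subset_Icc (fun k => hstep n k)
  have hIccS : ∀ n, Set.Icc (c n) (c (n + 1)) ⊆ S := by
    intro n x hx
    obtain ⟨h1, h2⟩ := hx
    refine ⟨fun k => le_trans (hnn n k) (h1 k), fun m => ?_⟩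
    calc x m ≤ c (n + 1) m := h2 m
      _ = G m (c n) := rfl
      _ ≤ G m x := hmono m (c n) x (hnn n) h1
  have hCS : C ⊆ S := by
    intro x hx
    obtain ⟨n, hn⟩ := Set.mem_iUnion.mp hx
    exact hIccS n (hsegIcc n hn)
  have hCconn : IsPreconnected C := by
    refine IsPreconnected.iUnion_of_chain
      (fun n => (convex_segment _ _).isPreconnected) (fun n => ?_)
    exact ⟨c (n + 1), right_mem_segment ℝ _ _, left_mem_segment ℝ _ _⟩
  have hcC : ∀ n, c n ∈ C :=
    fun n => Set.mem_iUnion.mpr ⟨n, left_mem_segment ℝ _ _⟩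
  have h0C : (0 : Fin M → ℝ) ∈ C := hcC 0
  have hχcl : χhat ∈ closure C :=
    mem_closure_of_tendsto htend (Filter.Eventually.of_forall fun n => hcC n)
  set D := insert χhat C with hDdef
  have hDconn : IsPreconnected D := by
    refine hCconn.subset_closure (Set.subset_insert _ _) ?_
    rintro x (rfl | hx)
    · exact hχcl
    · exact subset_closure hx
  have hDS : D ⊆ S := by
    rintro x (rfl | hx)
    · exact ⟨hχnn, fun m => le_of_eq (hfix m).symm⟩
    · exact hCS hx
  have h0D : (0 : Fin M → ℝ) ∈ D := Set.mem_insert_of_mem _ h0C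
  exact hDconn.subset_connectedComponentIn h0D hDS (Set.mem_insert _ _)
end

section
/- Let (X, C) be a pair of random variables with X ≥ 0, C > 0, E[X] < ∞. Define for the one-asset system with linear price impact h(χ) = χ and differentiable sales function ρ: ℝ≥0 → [0,1] with ρ(0) = 0: f(χ) = E[X ρ(X χ / C)] − χ. If E[X² / C] < ∞ and E[X²/C] · ρ'(0) < 1, then f'(0) exists and equals E[X²/C] ρ'(0) − 1 < 0, and consequently there exists δ > 0 such that f(χ) < 0 for all χ ∈ (0, δ]. -/
open MeasureTheory Filter Set Topology

/-!
Because `ρ(0) = 0` and `ρ` is differentiable at `0` and bounded, `|ρ u| ≤ K |u|` for some `K`.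
Hence the difference quotients `X ρ(Xχ/C) / χ` are dominated by `K |X²/C|`, which is integrable, and
converge pointwise to `X²/C · ρ'(0)`; dominated convergence gives `f'(0) = E[X²/C] ρ'(0) - 1 < 0`.
Since `f(0) = 0`, a negative right derivative forces `f < 0` just to the right of `0`.
-/

theorem exists_abs_le_mul_abs_of_hasDerivAt_zero {ρ : ℝ → ℝ} {ρ' B : ℝ} (hρ0 : ρ 0 = 0)
    (hρ : HasDerivAt ρ ρ' 0) (hB : ∀ u, |ρ u| ≤ B) : ∃ K, ∀ u, |ρ u| ≤ K * |u| := by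
  have hO : (fun u => ρ u) =O[𝓝 0] fun u => u := by simpa [hρ0] using hρ.isBigO_sub
  obtain ⟨c, hc⟩ := hO.bound
  obtain ⟨ε, hε, hball⟩ := Metric.eventually_nhds_iff.mp hc
  refine ⟨max c (B / ε), fun u => ?_⟩
  rcases lt_or_ge |u| ε with hu | hu
  · calc |ρ u| ≤ c * |u| := by simpa using hball (by simpa using hu)
      _ ≤ max c (B / ε) * |u| := by gcongr; exact le_max_left _ _
  · calc |ρ u| ≤ B := hB u
      _ ≤ B / ε * |u| := by
          rw [div_mul_eq_mul_div, le_div_iff₀ hε]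
          exact mul_le_mul_of_nonneg_left hu ((abs_nonneg _).trans (hB u))
      _ ≤ max c (B / ε) * |u| := by gcongr; exact le_max_right _ _

theorem tendsto_comp_mul_div_of_hasDerivAt_zero {ρ : ℝ → ℝ} {ρ' : ℝ} (hρ0 : ρ 0 = 0)
    (hρ : HasDerivAt ρ ρ' 0) (a : ℝ) :
    Tendsto (fun χ => ρ (a * χ) / χ) (𝓝[≠] 0) (𝓝 (a * ρ')) := by
  have hcomp : HasDerivAt (fun χ => ρ (a * χ)) (ρ' * a) 0 :=
    hρ.comp_of_eq 0 ((hasDerivAt_id 0).const_mul a |>.congr_deriv (mul_one a)) (mul_zero a).symm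
  rw [hasDerivAt_iff_tendsto_slope, mul_comm] at hcomp
  refine hcomp.congr fun χ => ?_
  simp [slope_def_field, hρ0]

/-- `ρ` need only be differentiable at `0`: the linear bound `hK` takes the place of the usual
bound on the derivative in differentiation under the integral sign. -/
theorem hasDerivAt_integral_mul_comp_mul {Ω : Type*} [MeasurableSpace Ω] {μ : Measure Ω}
    {a b : Ω → ℝ} (ha : Measurable a) (hb : Measurable b) (hab : Integrable (fun ω => b ω * a ω) μ)
    {ρ : ℝ → ℝ} {ρ' K : ℝ} (hρm : Measurable ρ) (hρ0 : ρ 0 = 0) (hρ : HasDerivAt ρ ρ' 0)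
    (hK : ∀ u, |ρ u| ≤ K * |u|) :
    HasDerivAt (fun χ => ∫ ω, b ω * ρ (a ω * χ) ∂μ) ((∫ ω, b ω * a ω ∂μ) * ρ') 0 := by
  rw [hasDerivAt_iff_tendsto_slope, ← integral_mul_const]
  have hslope : slope (fun χ => ∫ ω, b ω * ρ (a ω * χ) ∂μ) 0
      = fun χ => ∫ ω, b ω * (ρ (a ω * χ) / χ) ∂μ := by
    ext χ
    simp only [slope_def_field, mul_zero, hρ0, integral_zero, sub_zero, ← integral_div, mul_div]
  rw [hslope]
  refine tendsto_integral_filter_of_dominated_convergence (fun ω => K * |b ω * a ω|)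
    (Eventually.of_forall fun χ => ?_) (Eventually.of_forall fun χ => ?_) (hab.abs.const_mul K)
    (Eventually.of_forall fun ω => ?_)
  · exact (hb.mul ((hρm.comp (ha.mul_const χ)).div_const χ)).aestronglyMeasurable
  · refine Eventually.of_forall fun ω => ?_
    rcases eq_or_ne χ 0 with rfl | hχ
    · have hK0 : 0 ≤ K := by simpa using (abs_nonneg _).trans (hK 1)
      simp only [div_zero, mul_zero, norm_zero]
      positivity
    calc ‖b ω * (ρ (a ω * χ) / χ)‖ = |b ω| * |ρ (a ω * χ)| / |χ| := by
          rw [Real.norm_eq_abs, abs_mul, abs_div, mul_div_assoc]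
      _ ≤ |b ω| * (K * |a ω * χ|) / |χ| := by gcongr; exact hK _
      _ = K * |b ω * a ω| := by
          rw [abs_mul, abs_mul]
          field_simp [abs_ne_zero.mpr hχ]
  · simpa [mul_assoc] using
      (tendsto_comp_mul_div_of_hasDerivAt_zero hρ0 hρ (a ω)).const_mul (b ω)

theorem eventually_lt_of_hasDerivWithinAt_Ici {f : ℝ → ℝ} {f' x : ℝ}
    (hf : HasDerivWithinAt f f' (Ici x) x) (hf' : f' < 0) : ∀ᶠ y in 𝓝[>] x, f y < f x := by
  filter_upwards [hf.Ioi_of_Ici.limsup_slope_le' (lt_irrefl x) hf', self_mem_nhdsWithin]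
    with y hslope (hy : x < y)
  rw [slope_def_field, div_neg_iff] at hslope
  rcases hslope with ⟨-, hneg⟩ | ⟨hpos, -⟩ <;> linarith

theorem stmt9_general {Ω : Type*} [MeasurableSpace Ω] (μ : Measure Ω)
    (X C : Ω → ℝ) (hXm : Measurable X) (hCm : Measurable C)
    (ρ : ℝ → ℝ) (hρ0 : ρ 0 = 0) (hρmono : Monotone ρ)
    (hρrange : ∀ u, 0 ≤ ρ u ∧ ρ u ≤ 1)
    (ρ'0 : ℝ) (hρdiff : HasDerivAt ρ ρ'0 0)
    (hmom : Integrable (fun ω => X ω ^ 2 / C ω) μ)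
    (hres : (∫ ω, X ω ^ 2 / C ω ∂μ) * ρ'0 < 1) :
    HasDerivWithinAt (fun χ => (∫ ω, X ω * ρ (X ω * χ / C ω) ∂μ) - χ)
        ((∫ ω, X ω ^ 2 / C ω ∂μ) * ρ'0 - 1) (Set.Ici 0) 0 ∧
      ∃ δ > 0, ∀ χ ∈ Set.Ioc (0 : ℝ) δ,
        (∫ ω, X ω * ρ (X ω * χ / C ω) ∂μ) - χ < 0 := by
  obtain ⟨K, hK⟩ := exists_abs_le_mul_abs_of_hasDerivAt_zero hρ0 hρdiff (B := 1)
    fun u => abs_le.mpr ⟨by linarith [(hρrange u).1], (hρrange u).2⟩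
  have hsq : ∀ ω, X ω * (X ω / C ω) = X ω ^ 2 / C ω := fun ω => by ring
  have hderiv := (hasDerivAt_integral_mul_comp_mul (μ := μ) (a := fun ω => X ω / C ω)
    (hXm.div hCm) hXm (by simpa only [hsq] using hmom) hρmono.measurable hρ0 hρdiff hK).sub
    (hasDerivAt_id 0)
  simp only [hsq, ← mul_div_right_comm] at hderiv
  refine ⟨hderiv.hasDerivWithinAt, ?_⟩
  obtain ⟨δ, hδ, hsub⟩ := mem_nhdsGT_iff_exists_Ioc_subset.mp
    (eventually_lt_of_hasDerivWithinAt_Ici hderiv.hasDerivWithinAt (by linarith))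
  refine ⟨δ, hδ, fun χ hχ => ?_⟩
  simpa [hρ0] using hsub hχ

/-- Resilience direction of Corollary 4.3 (case 2): with linear price impact,
if `E[X²/C]·ρ'(0) < 1` then `f(χ) = E[X ρ(Xχ/C)] − χ` has right derivative
`E[X²/C]·ρ'(0) − 1 < 0` at `0`, and consequently `f < 0` on some `(0, δ]`. -/
theorem stmt9 {Ω : Type*} [MeasurableSpace Ω] (μ : Measure Ω) [IsProbabilityMeasure μ]
    (X C : Ω → ℝ) (hXm : Measurable X) (hCm : Measurable C)
    (hX : ∀ ω, 0 ≤ X ω) (hC : ∀ ω, 0 < C ω)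
    (hXint : Integrable X μ)
    (ρ : ℝ → ℝ) (hρ0 : ρ 0 = 0) (hρmono : Monotone ρ)
    (hρrange : ∀ u, 0 ≤ ρ u ∧ ρ u ≤ 1)
    (ρ'0 : ℝ) (hρdiff : HasDerivAt ρ ρ'0 0)
    (hmom : Integrable (fun ω => X ω ^ 2 / C ω) μ)
    (hres : (∫ ω, X ω ^ 2 / C ω ∂μ) * ρ'0 < 1) :
    HasDerivWithinAt (fun χ => (∫ ω, X ω * ρ (X ω * χ / C ω) ∂μ) - χ)
        ((∫ ω, X ω ^ 2 / C ω ∂μ) * ρ'0 - 1) (Set.Ici 0) 0 ∧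
      ∃ δ > 0, ∀ χ ∈ Set.Ioc (0 : ℝ) δ,
        (∫ ω, X ω * ρ (X ω * χ / C ω) ∂μ) - χ < 0 :=
  stmt9_general μ X C hXm hCm ρ hρ0 hρmono hρrange ρ'0 hρdiff hmom hres
end

section
/- Let X ≥ 0 and C > 0 be random variables with P(X > 0) = 1, let ν > 0, q > 0 with 1 − νq > 0, and let ρ_ε(u) = min{u^q, ε} for fixed ε ∈ (0,1), h(a) = a^ν. Then for every sequence (a_n) of positive reals with a_n → 0, liminf_{n→∞} E[X ρ_ε(X h(a_n)/C)] / a_n = ∞. -/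
open MeasureTheory Filter Set Topology

/-!
On a set `S = {δ ≤ X, C ≤ M}` of positive probability the integrand is at least
`δ · min((δ/M)^q, ε) · t^q` with `t = a_n^ν ≤ 1`, so the expectation is bounded below by a
constant times `a_n^{νq}`. Dividing by `a_n` leaves `a_n^{νq - 1}`, which diverges because
`νq < 1`.
-/

lemma tendsto_rpow_div_self_nhdsGT_zero {r : ℝ} (hr : r < 1) :
    Tendsto (fun x : ℝ => x ^ r / x) (𝓝[>] 0) atTop :=
  (tendsto_rpow_neg_nhdsGT_zero (sub_neg.2 hr)).congr' <|
    eventually_mem_nhdsWithin.mono fun _ hx => Real.rpow_sub_one (ne_of_gt hx) r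

lemma exists_measure_setOf_le_and_le_ne_zero {Ω : Type*} [MeasurableSpace Ω] {μ : Measure Ω}
    {X C : Ω → ℝ} (h : μ {ω | 0 < X ω} ≠ 0) :
    ∃ δ > 0, ∃ M > 0, μ {ω | δ ≤ X ω ∧ C ω ≤ M} ≠ 0 := by
  by_contra! H
  have hcover : {ω | 0 < X ω} ⊆
      ⋃ (i : ℕ) (j : ℕ), {ω | ((i : ℝ) + 1)⁻¹ ≤ X ω ∧ C ω ≤ (j : ℝ) + 1} := by
    intro ω (hω : 0 < X ω)
    obtain ⟨i, hi⟩ := exists_nat_one_div_lt hω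
    obtain ⟨j, hj⟩ := exists_nat_ge (C ω)
    simp only [mem_iUnion]
    exact ⟨i, j, by simpa using hi.le, by linarith⟩
  exact h <| measure_mono_null hcover <| measure_iUnion_null fun i =>
    measure_iUnion_null fun j => H _ (by positivity) _ (by positivity)

lemma mul_min_rpow_le_mul_min_rpow {x c δ M t q ε : ℝ} (hδ : 0 ≤ δ) (hδx : δ ≤ x) (hc : 0 < c)
    (hcM : c ≤ M) (ht₀ : 0 ≤ t) (ht₁ : t ≤ 1) (hq : 0 ≤ q) (hε : 0 ≤ ε) :
    δ * min ((δ / M) ^ q) ε * t ^ q ≤ x * min ((x * t / c) ^ q) ε := by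
  have hM : 0 < M := hc.trans_le hcM
  have htq : t ^ q ≤ 1 := Real.rpow_le_one ht₀ ht₁ hq
  have hx : 0 ≤ x := hδ.trans hδx
  have hm : (0 : ℝ) ≤ min ((δ / M) ^ q) ε := le_min (by positivity) hε
  rw [mul_assoc]
  refine mul_le_mul hδx (le_min ?_ ?_) (by positivity) hx
  · calc min ((δ / M) ^ q) ε * t ^ q ≤ (δ / M) ^ q * t ^ q := by gcongr; exact min_le_left _ _
      _ = (δ * t / M) ^ q := by rw [← Real.mul_rpow (by positivity) ht₀]; ring_nf
      _ ≤ (x * t / c) ^ q := by gcongr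
  · calc min ((δ / M) ^ q) ε * t ^ q ≤ ε * 1 := by gcongr; exact min_le_right _ _
      _ = ε := mul_one ε

lemma exists_pos_mul_rpow_le_integral_mul_min_rpow {Ω : Type*} [MeasurableSpace Ω]
    {μ : Measure Ω} [IsFiniteMeasure μ] {X C : Ω → ℝ} (hXm : Measurable X) (hCm : Measurable C)
    (hX : ∀ ω, 0 ≤ X ω) (hXpos : μ {ω | 0 < X ω} ≠ 0) (hC : ∀ ω, 0 < C ω)
    (hXint : Integrable X μ) {q ε : ℝ} (hq : 0 ≤ q) (hε : 0 < ε) :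
    ∃ κ > 0, ∀ t ∈ Icc (0 : ℝ) 1, κ * t ^ q ≤ ∫ ω, X ω * min ((X ω * t / C ω) ^ q) ε ∂μ := by
  obtain ⟨δ, hδ, M, hM, hS⟩ := exists_measure_setOf_le_and_le_ne_zero (C := C) hXpos
  set S := {ω | δ ≤ X ω ∧ C ω ≤ M}
  have hSm : MeasurableSet S :=
    (measurableSet_le measurable_const hXm).inter (measurableSet_le hCm measurable_const)
  have hSpos : 0 < μ.real S := ENNReal.toReal_pos hS (measure_ne_top μ S)
  have hmin : 0 < min ((δ / M) ^ q) ε := lt_min (by positivity) hε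
  refine ⟨δ * min ((δ / M) ^ q) ε * μ.real S, by positivity, fun t ⟨ht₀, ht₁⟩ => ?_⟩
  have hbase : ∀ ω, 0 ≤ (X ω * t / C ω) ^ q := fun ω =>
    Real.rpow_nonneg (div_nonneg (mul_nonneg (hX ω) ht₀) (hC ω).le) q
  have hf : Integrable (fun ω => X ω * min ((X ω * t / C ω) ^ q) ε) μ := by
    have hmeas : Measurable fun ω => min ((X ω * t / C ω) ^ q) ε :=
      (((hXm.mul_const t).div hCm).pow_const q).min measurable_const
    refine hXint.mul_bdd (c := ε) hmeas.aestronglyMeasurable (ae_of_all _ fun ω => ?_)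
    rw [Real.norm_of_nonneg (le_min (hbase ω) hε.le)]
    exact min_le_right _ _
  calc δ * min ((δ / M) ^ q) ε * μ.real S * t ^ q
      = δ * min ((δ / M) ^ q) ε * t ^ q * μ.real S := by ring
    _ ≤ ∫ ω in S, X ω * min ((X ω * t / C ω) ^ q) ε ∂μ :=
      setIntegral_ge_of_const_le_real hSm (measure_ne_top μ S) (fun ω ⟨hδX, hCM⟩ =>
        mul_min_rpow_le_mul_min_rpow hδ.le hδX (hC ω) hCM ht₀ ht₁ hq hε.le) hf.integrableOn
    _ ≤ ∫ ω, X ω * min ((X ω * t / C ω) ^ q) ε ∂μ :=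
      setIntegral_le_integral hf <| ae_of_all _ fun ω =>
        mul_nonneg (hX ω) (le_min (hbase ω) hε.le)

theorem stmt10_general {Ω : Type*} [MeasurableSpace Ω] (μ : Measure Ω) [IsProbabilityMeasure μ]
    (X C : Ω → ℝ) (hXm : Measurable X) (hCm : Measurable C)
    (hX : ∀ ω, 0 ≤ X ω) (hXpos : μ {ω | 0 < X ω} = 1) (hC : ∀ ω, 0 < C ω)
    (hXint : Integrable X μ)
    (ν q ε : ℝ) (hν : 0 < ν) (hq : 0 < q) (hνq : 0 < 1 - ν * q)
    (hε0 : 0 < ε)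
    (a : ℕ → ℝ) (ha : ∀ n, 0 < a n) (halim : Tendsto a atTop (nhds 0)) :
    Tendsto (fun n =>
        (∫ ω, X ω * min ((X ω * a n ^ ν / C ω) ^ q) ε ∂μ) / a n) atTop atTop := by
  obtain ⟨κ, hκ, hlow⟩ := exists_pos_mul_rpow_le_integral_mul_min_rpow hXm hCm hX
    (hXpos ▸ one_ne_zero) hC hXint hq.le hε0
  have ha' : Tendsto a atTop (𝓝[>] 0) :=
    tendsto_nhdsWithin_iff.2 ⟨halim, Eventually.of_forall ha⟩
  have hpow : Tendsto (fun n => a n ^ ν) atTop (𝓝 0) := by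
    simpa [Real.zero_rpow hν.ne'] using halim.rpow_const (Or.inr hν.le)
  have hgrowth : Tendsto (fun n => κ * (a n ^ (ν * q) / a n)) atTop atTop :=
    ((tendsto_rpow_div_self_nhdsGT_zero (by linarith)).comp ha').const_mul_atTop hκ
  refine tendsto_atTop_mono' _ ?_ hgrowth
  filter_upwards [hpow.eventually (eventually_le_nhds one_pos)] with n hn
  rw [← mul_div_assoc, Real.rpow_mul (ha n).le]
  exact div_le_div_of_nonneg_right (hlow _ ⟨Real.rpow_nonneg (ha n).le ν, hn⟩) (ha n).le

/-- Case 1 of Theorem 4.4 (non-resilience when `1 − νq > 0`):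
`liminf E[X ρ_ε(X h(a_n)/C)]/a_n = ∞`, stated as divergence to `atTop`. -/
theorem stmt10 {Ω : Type*} [MeasurableSpace Ω] (μ : Measure Ω) [IsProbabilityMeasure μ]
    (X C : Ω → ℝ) (hXm : Measurable X) (hCm : Measurable C)
    (hX : ∀ ω, 0 ≤ X ω) (hXpos : μ {ω | 0 < X ω} = 1) (hC : ∀ ω, 0 < C ω)
    (hXint : Integrable X μ)
    (ν q ε : ℝ) (hν : 0 < ν) (hq : 0 < q) (hνq : 0 < 1 - ν * q)
    (hε0 : 0 < ε) (hε1 : ε < 1)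
    (a : ℕ → ℝ) (ha : ∀ n, 0 < a n) (halim : Tendsto a atTop (nhds 0)) :
    Tendsto (fun n =>
        (∫ ω, X ω * min ((X ω * a n ^ ν / C ω) ^ q) ε ∂μ) / a n) atTop atTop :=
  stmt10_general μ X C hXm hCm hX hXpos hC hXint ν q ε hν hq hνq hε0 a ha halim
end

section
/- Let X ≥ 0 and C > 0 be random variables, q > 0, ν > 0 with νq > 1, and suppose there exists δ > 1 with δ/ν < q and E[X (X/C)^{δ/ν}] < ∞. Define h(a) = a^ν and ρ(u) = min{u^q, 1}. Then for every sequence (a_n) of positive reals with a_n → 0, lim_{n→∞} E[X ρ(X h(a_n)/C)] / a_n = 0. -/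
/-!
Since `min (u ^ q) 1 ≤ u ^ p` for `u ≥ 0` and `0 ≤ p ≤ q`, taking `p = δ / ν` bounds the
integrand by `a ^ δ * X (X / C) ^ (δ / ν)`. Hence the quotient is at most `a ^ (δ - 1)` times the
finite moment `E[X (X / C) ^ (δ / ν)]`, which tends to `0` because `δ > 1`.
-/

open MeasureTheory Filter

theorem Real.min_rpow_one_le_rpow {u p q : ℝ} (hu : 0 ≤ u) (hp : 0 ≤ p) (hpq : p ≤ q) :
    min (u ^ q) 1 ≤ u ^ p := by
  rcases le_total u 1 with hu1 | hu1
  · exact (min_le_left _ _).trans (Real.rpow_le_rpow_of_exponent_ge' hu hu1 hp hpq)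
  · exact (min_le_right _ _).trans (Real.one_le_rpow hu1 hp)

theorem mul_min_rpow_le_rpow_mul {x c t q ν δ : ℝ} (hx : 0 ≤ x) (hc : 0 ≤ c) (ht : 0 ≤ t)
    (hν : ν ≠ 0) (hδν : 0 ≤ δ / ν) (hδνq : δ / ν ≤ q) :
    x * min ((x * t ^ ν / c) ^ q) 1 ≤ t ^ δ * (x * (x / c) ^ (δ / ν)) := by
  have hxc : 0 ≤ x / c := div_nonneg hx hc
  have htν : 0 ≤ t ^ ν := Real.rpow_nonneg ht ν
  have hu : x * t ^ ν / c = x / c * t ^ ν := by ring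
  have hpow : (x / c * t ^ ν) ^ (δ / ν) = t ^ δ * (x / c) ^ (δ / ν) := by
    rw [Real.mul_rpow hxc htν, ← Real.rpow_mul ht, mul_div_cancel₀ δ hν, mul_comm]
  calc x * min ((x * t ^ ν / c) ^ q) 1 ≤ x * (x / c * t ^ ν) ^ (δ / ν) := by
        rw [hu]
        exact mul_le_mul_of_nonneg_left
          (Real.min_rpow_one_le_rpow (mul_nonneg hxc htν) hδν hδνq) hx
    _ = t ^ δ * (x * (x / c) ^ (δ / ν)) := by rw [hpow]; ring

theorem integral_div_le_rpow_sub_one_mul_integral {α : Type*} [MeasurableSpace α]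
    {μ : Measure α} {f g : α → ℝ} {t δ : ℝ} (ht : 0 < t) (hf : 0 ≤ f)
    (hfg : ∀ ω, f ω ≤ t ^ δ * g ω) (hg : Integrable g μ) :
    (∫ ω, f ω ∂μ) / t ≤ t ^ (δ - 1) * ∫ ω, g ω ∂μ := by
  have hint : ∫ ω, f ω ∂μ ≤ t ^ δ * ∫ ω, g ω ∂μ := by
    rw [← integral_const_mul]
    exact integral_mono_of_nonneg (.of_forall hf) (hg.const_mul _) (.of_forall hfg)
  calc (∫ ω, f ω ∂μ) / t ≤ t ^ δ * (∫ ω, g ω ∂μ) / t := by gcongr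
    _ = t ^ (δ - 1) * ∫ ω, g ω ∂μ := by
      rw [Real.rpow_sub ht, Real.rpow_one]
      ring

theorem stmt12_general {Ω : Type*} [MeasurableSpace Ω] (μ : Measure Ω)
    (X C : Ω → ℝ)
    (hX : ∀ ω, 0 ≤ X ω) (hC : ∀ ω, 0 < C ω)
    (q ν δ : ℝ) (hν : 0 < ν)
    (hδ : 1 < δ) (hδν : δ / ν < q)
    (hmom : Integrable (fun ω => X ω * (X ω / C ω) ^ (δ / ν)) μ)
    (a : ℕ → ℝ) (ha : ∀ n, 0 < a n) (halim : Tendsto a atTop (nhds 0)) :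
    Tendsto (fun n =>
        (∫ ω, X ω * min ((X ω * a n ^ ν / C ω) ^ q) 1 ∂μ) / a n) atTop (nhds 0) := by
  have hp : 0 ≤ δ / ν := div_nonneg (by linarith) hν.le
  have hintegrand : ∀ n ω, 0 ≤ X ω * min ((X ω * a n ^ ν / C ω) ^ q) 1 := fun n ω =>
    mul_nonneg (hX ω) (le_min (Real.rpow_nonneg (div_nonneg
      (mul_nonneg (hX ω) (Real.rpow_nonneg (ha n).le ν)) (hC ω).le) q) zero_le_one)
  have hbound : ∀ n, (∫ ω, X ω * min ((X ω * a n ^ ν / C ω) ^ q) 1 ∂μ) / a n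
      ≤ a n ^ (δ - 1) * ∫ ω, X ω * (X ω / C ω) ^ (δ / ν) ∂μ := fun n =>
    integral_div_le_rpow_sub_one_mul_integral (ha n) (hintegrand n)
      (fun ω => mul_min_rpow_le_rpow_mul (hX ω) (hC ω).le (ha n).le hν.ne' hp hδν.le) hmom
  have hlim : Tendsto (fun n => a n ^ (δ - 1)) atTop (nhds 0) := by
    simpa [Real.zero_rpow (by linarith : δ - 1 ≠ 0)] using
      halim.rpow_const (Or.inr (by linarith : (0 : ℝ) ≤ δ - 1))
  refine squeeze_zero (fun n => div_nonneg (integral_nonneg (hintegrand n)) (ha n).le) hbound ?_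
  simpa using hlim.mul_const (∫ ω, X ω * (X ω / C ω) ^ (δ / ν) ∂μ)

/-- Case 3 of Theorem 4.4 (resilience estimate when `νq > 1` and the moment
`E[X (X/C)^{δ/ν}]` is finite for some `δ ∈ (1, qν)`):
`E[X ρ(X h(a_n)/C)]/a_n → 0`. -/
theorem stmt12 {Ω : Type*} [MeasurableSpace Ω] (μ : Measure Ω) [IsProbabilityMeasure μ]
    (X C : Ω → ℝ) (hXm : Measurable X) (hCm : Measurable C)
    (hX : ∀ ω, 0 ≤ X ω) (hC : ∀ ω, 0 < C ω)
    (hXint : Integrable X μ)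
    (q ν δ : ℝ) (hq : 0 < q) (hν : 0 < ν) (hνq : 1 < ν * q)
    (hδ : 1 < δ) (hδν : δ / ν < q)
    (hmom : Integrable (fun ω => X ω * (X ω / C ω) ^ (δ / ν)) μ)
    (a : ℕ → ℝ) (ha : ∀ n, 0 < a n) (halim : Tendsto a atTop (nhds 0)) :
    Tendsto (fun n =>
        (∫ ω, X ω * min ((X ω * a n ^ ν / C ω) ^ q) 1 ∂μ) / a n) atTop (nhds 0) :=
  stmt12_general μ X C hX hC q ν δ hν hδ hδν hmom a ha halim
end

section
/- Consider the functions f_ε^m(χ) = E[(1−ε) X^m ρ_ε((L + (1−ε) X·h(χ))/C)] − χ^m with ρ_ε(u) = min(ρ(u), ε), for ε ∈ (0,1). In the finite-system coupling: if τ_(k) denotes the cumulative sales of the fire sales process on the system (x_i, c_i, ℓ_i) with sales function ρ, and σ_(k) denotes the cumulative sales of the auxiliary process on the modified system ((1−ε)x_i, c_i, ℓ_i) with sales function ρ_ε, then σ_(k) ≤ τ_(k) componentwise for all k ≥ 1, provided ε > 0 is small enough that ρ(u) ≥ ε whenever u > δ, where δ > 0 satisfies ρ(δ) ≤ ε (so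 that losses ≤ δ c_i imply at most an ε-fraction of shares sold). -/
open Filter Finset

/-- The coupling in the proof of Theorem 4.2: the auxiliary process on the
shrunken system `((1−ε)x_i, c_i, ℓ_i)` with sales function
`ρ_ε = min(ρ, ε)` is dominated round by round by the fire sales process on the
original system, provided `ρ(δ) ≤ ε` and `ρ(u) ≥ ε` for `u > δ`.
Indices are shifted so that round `k+1` of the paper is index `k`. -/
theorem stmt16 (M n : ℕ) (hn : 0 < n)
    (x : Fin n → Fin M → ℝ) (hx : ∀ i m, 0 ≤ x i m)
    (ℓ : Fin n → ℝ) (hℓ : ∀ i, 0 ≤ ℓ i)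
    (c : Fin n → ℝ) (hc : ∀ i, 0 < c i)
    (ρ : ℝ → ℝ) (hρ0 : ρ 0 = 0) (hρmono : Monotone ρ)
    (hρrange : ∀ u, 0 ≤ ρ u ∧ ρ u ≤ 1)
    (h : (Fin M → ℝ) → Fin M → ℝ)
    (hhrange : ∀ χ m, 0 ≤ h χ m ∧ h χ m ≤ 1)
    (hhmono : ∀ χ χ' : Fin M → ℝ, (∀ m, χ m ≤ χ' m) → ∀ m, h χ m ≤ h χ' m)
    (ε δ : ℝ) (hε0 : 0 < ε) (hε1 : ε < 1) (hδ : 0 < δ)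
    (hρδ : ρ δ ≤ ε) (hρε : ∀ u, δ < u → ε ≤ ρ u)
    -- fire sales process on the original system with sales function ρ
    (xk : Fin n → ℕ → Fin M → ℝ) (τ : ℕ → Fin M → ℝ) (ℓk : Fin n → ℕ → ℝ)
    (hxk0 : ∀ i, xk i 0 = x i)
    (hxkrec : ∀ i k m, xk i (k + 1) m = x i m * (1 - ρ (ℓk i k / c i)))
    (hτ0 : τ 0 = 0)
    (hτrec : ∀ k m, τ (k + 1) m = ∑ i, x i m * ρ (ℓk i k / c i))
    (hℓk : ∀ i k, ℓk i k = ℓ i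
        + (∑ m, xk i k m * h (fun m' => τ k m' / n) m)
        + ∑ j ∈ Finset.range k, ∑ m, (xk i j m - xk i (j + 1) m) * h (fun m' => τ j m' / n) m)
    -- auxiliary process on the shrunken system with sales function ρ_ε = min(ρ, ε)
    (σ : ℕ → Fin M → ℝ) (hσ0 : σ 0 = 0)
    (hσrec : ∀ k m, σ (k + 1) m =
        ∑ i, (1 - ε) * x i m *
          min (ρ ((ℓ i + ∑ m', (1 - ε) * x i m' * h (fun m'' => σ k m'' / n) m') / c i)) ε) :
    ∀ k m, σ k m ≤ τ k m := by
  have hn' : (0:ℝ) < n := by exact_mod_cast hn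
  have hρnn : ∀ u, 0 ≤ ρ u := fun u => (hρrange u).1
  have hxknn : ∀ i k m, 0 ≤ xk i k m := by
    intro i k m
    cases k with
    | zero => rw [hxk0]; exact hx i m
    | succ k =>
      rw [hxkrec]
      have := (hρrange (ℓk i k / c i)).2
      nlinarith [hx i m]
  have hdiff : ∀ k i, (∀ m, τ k m ≤ τ (k+1) m) → ℓk i k ≤ ℓk i (k+1) := by
    intro k i hτm
    rw [hℓk i k, hℓk i (k+1), Finset.sum_range_succ]
    have hs : ∑ m, xk i (k+1) m * h (fun m' => τ k m' / n) m
        ≤ ∑ m, xk i (k+1) m * h (fun m' => τ (k+1) m' / n) m := by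
      apply Finset.sum_le_sum
      intro m _
      apply mul_le_mul_of_nonneg_left _ (hxknn i (k+1) m)
      exact hhmono _ _ (fun m' => by gcongr; exact hτm m') m
    simp only [sub_mul, Finset.sum_sub_distrib]
    linarith
  have hmono : ∀ k, (∀ m, τ k m ≤ τ (k+1) m) ∧ (∀ i, ℓk i k ≤ ℓk i (k+1)) := by
    intro k
    induction k with
    | zero =>
      have hτm : ∀ m, τ 0 m ≤ τ 1 m := by
        intro m
        rw [hτrec 0 m, hτ0]
        simp only [Pi.zero_apply]
        exact Finset.sum_nonneg fun i _ => mul_nonneg (hx i m) (hρnn _)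
      exact ⟨hτm, fun i => hdiff 0 i hτm⟩
    | succ k ih =>
      have hτm : ∀ m, τ (k+1) m ≤ τ (k+2) m := by
        intro m
        rw [hτrec k m, hτrec (k+1) m]
        apply Finset.sum_le_sum
        intro i _
        apply mul_le_mul_of_nonneg_left _ (hx i m)
        apply hρmono
        gcongr
        · exact (hc i).le
        · exact ih.2 i
      exact ⟨hτm, fun i => hdiff (k+1) i hτm⟩
  have hxkmono : ∀ i k m, xk i (k+1) m ≤ xk i k m := by
    intro i k m
    cases k with
    | zero =>
      rw [hxk0, hxkrec]
      have := hρnn (ℓk i 0 / c i)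
      nlinarith [hx i m]
    | succ k =>
      rw [hxkrec, hxkrec]
      apply mul_le_mul_of_nonneg_left _ (hx i m)
      have : ρ (ℓk i k / c i) ≤ ρ (ℓk i (k+1) / c i) := by
        apply hρmono
        gcongr
        · exact (hc i).le
        · exact (hmono k).2 i
      linarith
  have hxklb : ∀ i k m, ℓk i k / c i ≤ δ → (1 - ε) * x i m ≤ xk i k m := by
    intro i k m hk
    cases k with
    | zero => rw [hxk0]; nlinarith [hx i m]
    | succ k =>
      rw [hxkrec]
      have h1 : ℓk i k / c i ≤ δ := by
        have := (hmono k).2 i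
        have h2 : ℓk i k / c i ≤ ℓk i (k+1) / c i := by
          gcongr
          exact (hc i).le
        linarith
      have h3 : ρ (ℓk i k / c i) ≤ ε := le_trans (hρmono h1) hρδ
      nlinarith [hx i m]
  intro k
  induction k with
  | zero => intro m; simp [hσ0, hτ0]
  | succ k ih =>
    intro m
    rw [hσrec, hτrec]
    apply Finset.sum_le_sum
    intro i _
    set A := ℓ i + ∑ m', (1 - ε) * x i m' * h (fun m'' => σ k m'' / n) m' with hA
    set p := min (ρ (A / c i)) ε with hp
    have hp0 : 0 ≤ p := le_min (hρnn _) hε0.le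
    have hpε : p ≤ ε := min_le_right _ _
    by_cases hcase : ℓk i k / c i ≤ δ
    · -- case 1: small losses
      have hAle : A ≤ ℓk i k := by
        rw [hℓk i k]
        have hs : ∑ m', (1 - ε) * x i m' * h (fun m'' => σ k m'' / n) m'
            ≤ ∑ m', xk i k m' * h (fun m'' => τ k m'' / n) m' := by
          apply Finset.sum_le_sum
          intro m' _
          apply mul_le_mul (hxklb i k m' hcase)
            (hhmono _ _ (fun m'' => by gcongr; exact ih m'') m')
            (hhrange _ m').1 (hxknn i k m')
        have hT : 0 ≤ ∑ j ∈ Finset.range k, ∑ m',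
            (xk i j m' - xk i (j+1) m') * h (fun m'' => τ j m'' / n) m' := by
          apply Finset.sum_nonneg
          intro j _
          apply Finset.sum_nonneg
          intro m' _
          exact mul_nonneg (sub_nonneg.mpr (hxkmono i j m')) (hhrange _ m').1
        linarith
      have hρA : ρ (A / c i) ≤ ρ (ℓk i k / c i) := by
        apply hρmono
        gcongr
        exact (hc i).le
      have hpρ : p ≤ ρ (ℓk i k / c i) := le_trans (min_le_left _ _) hρA
      nlinarith [mul_le_mul_of_nonneg_left hpρ (hx i m),
        mul_nonneg (mul_nonneg hε0.le (hx i m)) hp0]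
    · -- case 2: large losses
      push_neg at hcase
      have hρu : ε ≤ ρ (ℓk i k / c i) := hρε _ hcase
      have hpρ : p ≤ ρ (ℓk i k / c i) := hpε.trans hρu
      nlinarith [mul_le_mul_of_nonneg_left hpρ (hx i m),
        mul_nonneg (mul_nonneg hε0.le (hx i m)) hp0]
end
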